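/- Let n ≥ λ, let ℓ ≤ t+ℓ, and let T ⊆ {0,1}^n be a set of size t+ℓ whose type is ℓ-fold λ-prefix collision-free. Then averaging over uniform k ∈ {0,1}^λ the conjugation of |T⟩⟨T| by (Z^k ⊗ I_{n−λ})^{⊗ℓ} ⊗ I^{⊗t} yields E_{X ← C(T,ℓ)}[|X⟩⟨X| ⊗ |T\X⟩⟨T\X|]; i.e., E_k[((Z^k⊗I)^{⊗ℓ}⊗I^{⊗t}) |T⟩⟨T| ((Z^k⊗I)^{⊗ℓ}⊗I^{⊗t})] equals the uniform mixture over ℓ-subsets X of T of |X⟩⟨X| ⊗ |T\X⟩⟨T\X|. -/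

import Mathlib

/-- The type state `|T⟩` of a finite set `T` (a collision-free type), as a real
vector indexed by tuples `ι → α`. -/
noncomputable def typeState {α : Type*} [DecidableEq α] {ι : Type*} [Fintype ι] [DecidableEq ι]
    (T : Finset α) : (ι → α) → ℝ := fun v =>
  if Function.Injective v ∧ Finset.image v Finset.univ = T then
    (Real.sqrt (Nat.factorial (Fintype.card ι)))⁻¹ else 0

/-- The sign `(-1)^{Σ_{i<ℓ} ⟨k, (u i)_{[1:λ]}⟩}` picked up by
`(Z^k ⊗ I_{n-λ})^{⊗ℓ} ⊗ I^{⊗t}` on the computational-basis tuple `u`. -/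
def zSign (n lam t ℓ : ℕ) (hln : lam ≤ n) (k : Fin lam → ZMod 2)
    (u : Fin ℓ ⊕ Fin t → Fin n → ZMod 2) : ℝ :=
  (-1 : ℝ) ^ (∑ i : Fin ℓ, ∑ j : Fin lam, k j * u (Sum.inl i) (Fin.castLE hln j)).val

/-!
Entrywise, averaging the signs over `k` is orthogonality of the characters of `(ZMod 2)^λ`: the
`(u, w)` entry of `|T⟩⟨T|` survives exactly when the `λ`-prefixes of the XORs of the first `ℓ`
entries of `u` and of `w` agree, which by prefix collision-freeness means that `u` and `w` put the
same `ℓ`-subset `X ⊆ T` in their first block. On the other side, the amplitude of `|X⟩ ⊗ |T \ X⟩`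
at an ordering `v` of `T` is `√C(t+ℓ, ℓ)` times that of `|T⟩` if the first block of `v` enumerates
`X`, and zero otherwise; so both sides have the same entries.
-/

lemma neg_one_pow_val_add (x y : ZMod 2) :
    (-1 : ℝ) ^ (x + y).val = (-1) ^ x.val * (-1) ^ y.val := by
  rw [ZMod.val_add, ← neg_one_pow_eq_pow_mod_two, pow_add]

lemma neg_one_pow_val_sum {ι : Type*} [DecidableEq ι] (s : Finset ι) (f : ι → ZMod 2) :
    (-1 : ℝ) ^ (∑ i ∈ s, f i).val = ∏ i ∈ s, (-1 : ℝ) ^ (f i).val := by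
  induction s using Finset.induction_on with
  | empty => simp
  | insert _ _ h ih => rw [Finset.sum_insert h, Finset.prod_insert h, neg_one_pow_val_add, ih]

lemma sum_neg_one_pow_val_mul (c : ZMod 2) :
    ∑ b : ZMod 2, (-1 : ℝ) ^ (b * c).val = if c = 0 then 2 else 0 := by
  rw [show (Finset.univ : Finset (ZMod 2)) = {0, 1} from rfl, Finset.sum_pair zero_ne_one]
  obtain rfl | rfl : c = 0 ∨ c = 1 := by decide +revert
  · norm_num
  · simp [ZMod.val_one]

lemma sum_neg_one_pow_val_dotProduct {ι : Type*} [Fintype ι] [DecidableEq ι] (c : ι → ZMod 2) :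
    ∑ k : ι → ZMod 2, (-1 : ℝ) ^ (k ⬝ᵥ c).val = if c = 0 then 2 ^ Fintype.card ι else 0 := by
  simp only [dotProduct, neg_one_pow_val_sum]
  rw [← Fintype.prod_sum (fun j (b : ZMod 2) => (-1 : ℝ) ^ (b * c j).val)]
  simp [sum_neg_one_pow_val_mul, Finset.prod_ite_zero, funext_iff]

section TypeState

variable {α ι κ : Type*} [DecidableEq α] [Fintype ι] [Fintype κ]

lemma image_univ_sum (v : ι ⊕ κ → α) :
    Finset.univ.image v =
      Finset.univ.image (v ∘ Sum.inl) ∪ Finset.univ.image (v ∘ Sum.inr) := by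
  ext x
  simp [Sum.exists]

lemma disjoint_image_inl_image_inr {v : ι ⊕ κ → α} (hv : Function.Injective v) :
    Disjoint (Finset.univ.image (v ∘ Sum.inl)) (Finset.univ.image (v ∘ Sum.inr)) := by
  simp [Finset.disjoint_left, hv.eq_iff]

lemma image_inl_mem_powersetCard {T : Finset α} {v : ι ⊕ κ → α} (hv : Function.Injective v)
    (himage : Finset.univ.image v = T) :
    Finset.univ.image (v ∘ Sum.inl) ∈ T.powersetCard (Fintype.card ι) := by
  refine Finset.mem_powersetCard.2 ⟨?_, ?_⟩
  · rw [← himage, image_univ_sum]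
    exact Finset.subset_union_left
  · rw [Finset.card_image_of_injective _ (hv.comp Sum.inl_injective), Finset.card_univ]

variable [DecidableEq ι] [DecidableEq κ]

lemma typeState_eq_zero {T : Finset α} {v : ι → α}
    (hv : ¬ (Function.Injective v ∧ Finset.univ.image v = T)) : typeState T v = 0 :=
  if_neg hv

lemma typeState_eq_of_injective {T : Finset α} {v : ι → α} (hinj : Function.Injective v)
    (himage : Finset.univ.image v = T) :
    typeState T v = (Real.sqrt (Fintype.card ι).factorial)⁻¹ :=
  if_pos ⟨hinj, himage⟩

lemma injective_and_image_of_typeState_ne_zero {T : Finset α} {v : ι → α}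
    (h : typeState T v ≠ 0) : Function.Injective v ∧ Finset.univ.image v = T := by
  by_contra hc
  exact h (typeState_eq_zero hc)

lemma injective_and_image_of_typeState_mul_ne_zero {T X : Finset α} (hX : X ⊆ T)
    {v : ι ⊕ κ → α} (h : typeState X (v ∘ Sum.inl) * typeState (T \ X) (v ∘ Sum.inr) ≠ 0) :
    Function.Injective v ∧ Finset.univ.image v = T := by
  obtain ⟨hinl, himl⟩ := injective_and_image_of_typeState_ne_zero (left_ne_zero_of_mul h)
  obtain ⟨hinr, himr⟩ := injective_and_image_of_typeState_ne_zero (right_ne_zero_of_mul h)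
  refine ⟨?_, by rw [image_univ_sum, himl, himr, Finset.union_sdiff_of_subset hX]⟩
  rw [← Sum.elim_comp_inl_inr v]
  refine hinl.sumElim hinr fun i j hij => ?_
  have hi : v (Sum.inl i) ∈ X := himl ▸ Finset.mem_image_of_mem _ (Finset.mem_univ i)
  have hj : v (Sum.inr j) ∈ T \ X := himr ▸ Finset.mem_image_of_mem _ (Finset.mem_univ j)
  rw [Function.comp_apply, Function.comp_apply] at hij
  exact (Finset.mem_sdiff.1 hj).2 (hij ▸ hi)

lemma inv_sqrt_factorial_mul_inv_sqrt_factorial (a b : ℕ) :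
    (Real.sqrt a.factorial)⁻¹ * (Real.sqrt b.factorial)⁻¹
      = Real.sqrt ((a + b).choose a) * (Real.sqrt (a + b).factorial)⁻¹ := by
  rw [add_comm a b, ← Nat.add_choose_mul_factorial_mul_factorial b a]
  push_cast
  rw [Real.sqrt_mul (by positivity), Real.sqrt_mul (by positivity)]
  have : 0 < Real.sqrt a.factorial := Real.sqrt_pos.2 (by positivity)
  have : 0 < Real.sqrt b.factorial := Real.sqrt_pos.2 (by positivity)
  have : 0 < Real.sqrt ((b + a).choose a) :=
    Real.sqrt_pos.2 (by exact_mod_cast Nat.choose_pos (Nat.le_add_left a b))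
  field_simp

lemma typeState_mul_typeState_sdiff {T X : Finset α} (hX : X ⊆ T) (v : ι ⊕ κ → α) :
    typeState X (v ∘ Sum.inl) * typeState (T \ X) (v ∘ Sum.inr)
      = if Finset.univ.image (v ∘ Sum.inl) = X then
          Real.sqrt ((Fintype.card ι + Fintype.card κ).choose (Fintype.card ι)) * typeState T v
        else 0 := by
  by_cases hv : Function.Injective v ∧ Finset.univ.image v = T
  · split_ifs with hvX
    · have hvXc : Finset.univ.image (v ∘ Sum.inr) = T \ X := by
        rw [← hv.2, image_univ_sum, hvX, ← hvX,
          Finset.union_sdiff_cancel_left (disjoint_image_inl_image_inr hv.1)]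
      rw [typeState_eq_of_injective (hv.1.comp Sum.inl_injective) hvX,
        typeState_eq_of_injective (hv.1.comp Sum.inr_injective) hvXc,
        typeState_eq_of_injective hv.1 hv.2, Fintype.card_sum,
        inv_sqrt_factorial_mul_inv_sqrt_factorial]
    · rw [typeState_eq_zero (fun h => hvX h.2), zero_mul]
  · rw [typeState_eq_zero hv, mul_zero, ite_self]
    by_contra h
    exact hv (injective_and_image_of_typeState_mul_ne_zero hX h)

end TypeState

section ZSign

variable {n lam t ℓ : ℕ} (hln : lam ≤ n)

/-- The `λ`-prefix of `⊕_{i ∈ s} x i`. -/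
def prefixXor {ι : Type*} (s : Finset ι) (x : ι → Fin n → ZMod 2) : Fin lam → ZMod 2 :=
  fun j => ∑ i ∈ s, x i (Fin.castLE hln j)

lemma prefixXor_univ_eq_prefixXor_image {ι : Type*} [Fintype ι] {x : ι → Fin n → ZMod 2}
    (hx : Function.Injective x) :
    prefixXor hln Finset.univ x = prefixXor hln (Finset.univ.image x) id := by
  funext j
  exact (Finset.sum_image (f := fun y => y (Fin.castLE hln j)) fun _ _ _ _ h => hx h).symm

lemma zSign_eq (k : Fin lam → ZMod 2) (u : Fin ℓ ⊕ Fin t → Fin n → ZMod 2) :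
    zSign n lam t ℓ hln k u = (-1) ^ (k ⬝ᵥ prefixXor hln Finset.univ (u ∘ Sum.inl)).val := by
  rw [zSign, Finset.sum_comm]
  simp only [dotProduct, prefixXor, Finset.mul_sum, Function.comp_apply]

lemma sum_zSign_mul_zSign (u w : Fin ℓ ⊕ Fin t → Fin n → ZMod 2) :
    ∑ k, zSign n lam t ℓ hln k u * zSign n lam t ℓ hln k w
      = if prefixXor hln Finset.univ (u ∘ Sum.inl) = prefixXor hln Finset.univ (w ∘ Sum.inl)
        then 2 ^ lam else 0 := by
  simp only [zSign_eq, ← neg_one_pow_val_add, ← dotProduct_add]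
  rw [sum_neg_one_pow_val_dotProduct, Fintype.card_fin]
  refine if_congr ?_ rfl rfl
  simp only [funext_iff, Pi.add_apply, Pi.zero_apply, CharTwo.add_eq_zero]

lemma sum_zSign_mul_mul_zSign_mul (u w : Fin ℓ ⊕ Fin t → Fin n → ZMod 2) (a b : ℝ) :
    ∑ k, (zSign n lam t ℓ hln k u * a) * (zSign n lam t ℓ hln k w * b)
      = (if prefixXor hln Finset.univ (u ∘ Sum.inl) = prefixXor hln Finset.univ (w ∘ Sum.inl)
          then 2 ^ lam else 0) * (a * b) := by
  rw [← sum_zSign_mul_zSign, Finset.sum_mul]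
  exact Finset.sum_congr rfl fun k _ => mul_mul_mul_comm _ _ _ _

def IsPrefixCollisionFree (ℓ : ℕ) (T : Finset (Fin n → ZMod 2)) : Prop :=
  ∀ S S' : Finset (Fin n → ZMod 2), S ⊆ T → S' ⊆ T → S.card = ℓ → S'.card = ℓ →
    (∀ j, prefixXor hln S id j = prefixXor hln S' id j) → S = S'

lemma prefixXor_inl_eq_iff {T : Finset (Fin n → ZMod 2)} (hT : IsPrefixCollisionFree hln ℓ T)
    {u w : Fin ℓ ⊕ Fin t → Fin n → ZMod 2} (hu : Function.Injective u)
    (huT : Finset.univ.image u = T) (hw : Function.Injective w) (hwT : Finset.univ.image w = T) :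
    prefixXor hln Finset.univ (u ∘ Sum.inl) = prefixXor hln Finset.univ (w ∘ Sum.inl)
      ↔ Finset.univ.image (u ∘ Sum.inl) = Finset.univ.image (w ∘ Sum.inl) := by
  rw [prefixXor_univ_eq_prefixXor_image hln (hu.comp Sum.inl_injective),
    prefixXor_univ_eq_prefixXor_image hln (hw.comp Sum.inl_injective)]
  obtain ⟨hXuT, hXuc⟩ := Finset.mem_powersetCard.1 (image_inl_mem_powersetCard hu huT)
  obtain ⟨hXwT, hXwc⟩ := Finset.mem_powersetCard.1 (image_inl_mem_powersetCard hw hwT)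
  rw [Fintype.card_fin] at hXuc hXwc
  exact ⟨fun h => hT _ _ hXuT hXwT hXuc hXwc (congrFun h), fun h => by rw [h]⟩

end ZSign

theorem stmt9_general (n lam t ℓ : ℕ) (hln : lam ≤ n)
    (T : Finset (Fin n → ZMod 2))
    (hfree : ∀ S S' : Finset (Fin n → ZMod 2), S ⊆ T → S' ⊆ T →
      S.card = ℓ → S'.card = ℓ →
      (∀ j : Fin lam, (∑ x ∈ S, x (Fin.castLE hln j)) = ∑ x ∈ S', x (Fin.castLE hln j)) →
      S = S') :
    (((2 : ℝ) ^ lam)⁻¹ • ∑ k : Fin lam → ZMod 2,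
        (Matrix.of fun u w : Fin ℓ ⊕ Fin t → Fin n → ZMod 2 =>
          (zSign n lam t ℓ hln k u * typeState T u) *
            (zSign n lam t ℓ hln k w * typeState T w)))
      = ((((t + ℓ).choose ℓ : ℝ))⁻¹ • ∑ X ∈ T.powersetCard ℓ,
          (Matrix.of fun u w : Fin ℓ ⊕ Fin t → Fin n → ZMod 2 =>
            (typeState (ι := Fin ℓ) X (u ∘ Sum.inl) *
              typeState (ι := Fin t) (T \ X) (u ∘ Sum.inr)) *
            (typeState (ι := Fin ℓ) X (w ∘ Sum.inl) *
              typeState (ι := Fin t) (T \ X) (w ∘ Sum.inr)))) := by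
  ext u w
  simp only [Matrix.smul_apply, Matrix.sum_apply, Matrix.of_apply, smul_eq_mul]
  have hsplit (v : Fin ℓ ⊕ Fin t → Fin n → ZMod 2) (X : Finset (Fin n → ZMod 2))
      (hX : X ∈ T.powersetCard ℓ) :
      typeState X (v ∘ Sum.inl) * typeState (T \ X) (v ∘ Sum.inr)
        = if Finset.univ.image (v ∘ Sum.inl) = X then
            √((t + ℓ).choose ℓ : ℝ) * typeState T v else 0 := by
    simpa [add_comm] using typeState_mul_typeState_sdiff (Finset.mem_powersetCard.1 hX).1 v
  rw [sum_zSign_mul_mul_zSign_mul, Finset.sum_congr rfl fun X hX => by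
    rw [hsplit u X hX, hsplit w X hX]]
  simp only [ite_mul, zero_mul, Finset.sum_ite_eq]
  by_cases hu : typeState T u = 0
  · simp [hu]
  by_cases hw : typeState T w = 0
  · simp [hw]
  obtain ⟨huinj, huT⟩ := injective_and_image_of_typeState_ne_zero hu
  obtain ⟨hwinj, hwT⟩ := injective_and_image_of_typeState_ne_zero hw
  have hXu := image_inl_mem_powersetCard huinj huT
  rw [Fintype.card_fin] at hXu
  have hchoose : ((t + ℓ).choose ℓ : ℝ) ≠ 0 := by
    exact_mod_cast (Nat.choose_pos (Nat.le_add_left ℓ t)).ne'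
  rw [if_congr ((prefixXor_inl_eq_iff hln hfree huinj huT hwinj hwT).trans eq_comm) rfl rfl,
    if_pos hXu]
  split_ifs
  · field_simp
    rw [Real.sq_sqrt (Nat.cast_nonneg _)]
  · simp

/-- for a set `T ⊆ {0,1}^n` of size `t+ℓ` whose type is `ℓ`-fold
`λ`-prefix collision-free, averaging over uniform `k` the conjugation of `|T⟩⟨T|`
by `(Z^k ⊗ I_{n-λ})^{⊗ℓ} ⊗ I^{⊗t}` yields the uniform mixture over `ℓ`-subsets
`X ⊆ T` of `|X⟩⟨X| ⊗ |T\X⟩⟨T\X|`. -/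
theorem stmt9 (n lam t ℓ : ℕ) (hln : lam ≤ n)
    (T : Finset (Fin n → ZMod 2)) (hT : T.card = t + ℓ)
    (hfree : ∀ S S' : Finset (Fin n → ZMod 2), S ⊆ T → S' ⊆ T →
      S.card = ℓ → S'.card = ℓ →
      (∀ j : Fin lam, (∑ x ∈ S, x (Fin.castLE hln j)) = ∑ x ∈ S', x (Fin.castLE hln j)) →
      S = S') :
    (((2 : ℝ) ^ lam)⁻¹ • ∑ k : Fin lam → ZMod 2,
        (Matrix.of fun u w : Fin ℓ ⊕ Fin t → Fin n → ZMod 2 =>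
          (zSign n lam t ℓ hln k u * typeState T u) *
            (zSign n lam t ℓ hln k w * typeState T w)))
      = ((((t + ℓ).choose ℓ : ℝ))⁻¹ • ∑ X ∈ T.powersetCard ℓ,
          (Matrix.of fun u w : Fin ℓ ⊕ Fin t → Fin n → ZMod 2 =>
            (typeState (ι := Fin ℓ) X (u ∘ Sum.inl) *
              typeState (ι := Fin t) (T \ X) (u ∘ Sum.inr)) *
            (typeState (ι := Fin ℓ) X (w ∘ Sum.inl) *
              typeState (ι := Fin t) (T \ X) (w ∘ Sum.inr)))) :=
  stmt9_general n lam t ℓ hln T hfree
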